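/- (Lemma 3.3) Let G=(V,E) be a finite graph, m1,m2≥1 integers, p,q≥2, h1,h2:V→(0,∞), and F:V×ℝ²→ℝ with (s,t)↦F(x,s,t) continuous for every x∈V. Suppose there exist α∈[0,p), β∈[0,q) and f1,f2,g:V→ℝ with F(x,s,t) ≤ f1(x)|s|^α + f2(x)|t|^β + g(x) for all (x,s,t)∈V×ℝ². Then for each λ>0 the functional φ_λ = Φ − λΨ is coercive: for every K∈ℝ there exists R>0 such that ‖u‖_{W^{m1,p}} + ‖v‖_{W^{m2,q}} ≥ R implies Φ(u,v) − λΨ(u,v) ≥ K. -/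

import Mathlib

/-!
Keeping a single vertex in the sum defining the Sobolev norm gives
`|u x| ≤ (μ x * h x)^(-1/l) * ‖u‖_{W^{m,l}}`, so the growth condition on `F` yields
`Ψ(u,v) ≤ A ‖u‖^α + B ‖v‖^β + C`. Hence `Φ - λΨ ≥ f ‖u‖ + g ‖v‖ - λC` with
`f N = N^p/p - λ A N^α` and `g N = N^q/q - λ B N^β`. Since `α < p` and `β < q`, both tend to `+∞`;
being continuous on `[0, ∞)` they are also bounded below there, and if `‖u‖ + ‖v‖` is large then
one of the two norms is large.
-/
open Real

noncomputable section

variable {V : Type*}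

/-- Integral on a finite graph: `∫_V u dμ = ∑_{x∈V} μ(x) u(x)`. -/
def intV [Fintype V] (μ u : V → ℝ) : ℝ := ∑ x, μ x * u x

/-- Graph Laplacian. -/
def glap [Fintype V] (w : V → V → ℝ) (μ : V → ℝ) (u : V → ℝ) (x : V) : ℝ :=
  (1 / μ x) * ∑ y, w x y * (u y - u x)

/-- The bilinear form Γ. -/
def ggam [Fintype V] (w : V → V → ℝ) (μ : V → ℝ) (u v : V → ℝ) (x : V) : ℝ :=
  (1 / (2 * μ x)) * ∑ y, w x y * (u y - u x) * (v y - v x)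

/-- Length of the gradient: `|∇u|(x) = √(Γ(u,u)(x))`. -/
def gnorm [Fintype V] (w : V → V → ℝ) (μ : V → ℝ) (u : V → ℝ) (x : V) : ℝ :=
  Real.sqrt (ggam w μ u u x)

/-- The length `|∇^m u|` of the m-th order gradient. -/
def gradm [Fintype V] (w : V → V → ℝ) (μ : V → ℝ) (m : ℕ) (u : V → ℝ) (x : V) : ℝ :=
  if m % 2 = 1 then gnorm w μ ((glap w μ)^[(m - 1) / 2] u) x
  else |((glap w μ)^[m / 2] u) x|

/-- The Sobolev norm `‖u‖_{W^{m,l}}` (with weight `h`). -/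
def wnorm [Fintype V] (w : V → V → ℝ) (μ h : V → ℝ) (m : ℕ) (l : ℝ) (u : V → ℝ) : ℝ :=
  (intV μ (fun x => gradm w μ m u x ^ l + h x * |u x| ^ l)) ^ (1 / l)

/-- min of a function over the (nonempty finite) vertex set. -/
def fmin [Fintype V] [Nonempty V] (f : V → ℝ) : ℝ :=
  Finset.univ.inf' Finset.univ_nonempty f

/-- max of a function over the (nonempty finite) vertex set. -/
def fmax [Fintype V] [Nonempty V] (f : V → ℝ) : ℝ :=
  Finset.univ.sup' Finset.univ_nonempty f

/-- The poly-Laplacian pairing `B_{m,p}(u,φ)`. -/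
def Bmp [Fintype V] (w : V → V → ℝ) (μ : V → ℝ) (m : ℕ) (p : ℝ) (u φ : V → ℝ) : ℝ :=
  if m % 2 = 1 then
    intV μ (fun x => gradm w μ m u x ^ (p - 2) *
      ggam w μ ((glap w μ)^[(m - 1) / 2] u) ((glap w μ)^[(m - 1) / 2] φ) x)
  else
    intV μ (fun x => gradm w μ m u x ^ (p - 2) *
      ((glap w μ)^[m / 2] u x) * ((glap w μ)^[m / 2] φ x))

end

noncomputable section
variable {V : Type*}

/-- The functional Φ. -/
def PhiF [Fintype V] (w : V → V → ℝ) (μ h1 h2 : V → ℝ) (m1 m2 : ℕ) (p q : ℝ)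
    (u v : V → ℝ) : ℝ :=
  (1 / p) * wnorm w μ h1 m1 p u ^ p + (1 / q) * wnorm w μ h2 m2 q v ^ q

/-- The functional Ψ. -/
def PsiF [Fintype V] (μ : V → ℝ) (F : V → ℝ → ℝ → ℝ) (u v : V → ℝ) : ℝ :=
  intV μ (fun x => F x (u x) (v x))

end


open Filter Set Topology

section RealAnalysis

theorem exists_forall_le_of_tendsto_atTop {f : ℝ → ℝ} (hf : ContinuousOn f (Ici 0))
    (hlim : Tendsto f atTop atTop) : ∃ M, ∀ N, 0 ≤ N → M ≤ f N := by
  obtain ⟨N₀, hN₀⟩ := eventually_atTop.1 (hlim.eventually_ge_atTop 0)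
  obtain ⟨M, hM⟩ :=
    (isCompact_Icc (a := 0) (b := N₀)).bddBelow_image (hf.mono Icc_subset_Ici_self)
  refine ⟨min M 0, fun N hN => ?_⟩
  rcases le_total N N₀ with hle | hge
  · exact (min_le_left _ _).trans (hM ⟨N, ⟨hN, hle⟩, rfl⟩)
  · exact (min_le_right _ _).trans (hN₀ N hge)

theorem exists_le_add_of_tendsto_atTop {f g : ℝ → ℝ}
    (hf : ContinuousOn f (Ici 0)) (hg : ContinuousOn g (Ici 0))
    (hf_lim : Tendsto f atTop atTop) (hg_lim : Tendsto g atTop atTop) (K : ℝ) :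
    ∃ R, 0 < R ∧ ∀ a b, 0 ≤ a → 0 ≤ b → R ≤ a + b → K ≤ f a + g b := by
  obtain ⟨Mf, hMf⟩ := exists_forall_le_of_tendsto_atTop hf hf_lim
  obtain ⟨Mg, hMg⟩ := exists_forall_le_of_tendsto_atTop hg hg_lim
  obtain ⟨Rf, hRf⟩ := eventually_atTop.1 (hf_lim.eventually_ge_atTop (K - Mg))
  obtain ⟨Rg, hRg⟩ := eventually_atTop.1 (hg_lim.eventually_ge_atTop (K - Mf))
  refine ⟨max 1 (Rf + Rg), by positivity, fun a b ha hb hab => ?_⟩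
  by_cases haf : Rf ≤ a
  · linarith [hRf a haf, hMg b hb]
  · have hbg : Rg ≤ b := by linarith [le_max_right 1 (Rf + Rg)]
    linarith [hRg b hbg, hMf a ha]

theorem tendsto_rpow_div_sub_mul_rpow_atTop {p α : ℝ} (hp : 0 < p) (hαp : α < p) (c : ℝ) :
    Tendsto (fun N : ℝ => N ^ p / p - c * N ^ α) atTop atTop := by
  have hlim : Tendsto (fun N : ℝ => 1 / p - c * N ^ (-(p - α))) atTop (𝓝 (1 / p)) := by
    simpa using tendsto_const_nhds.sub
      ((tendsto_rpow_neg_atTop (sub_pos.2 hαp)).const_mul c)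
  refine ((tendsto_rpow_atTop hp).atTop_mul_pos (by positivity) hlim).congr' ?_
  filter_upwards [eventually_gt_atTop 0] with N hN
  rw [mul_sub, mul_left_comm, ← Real.rpow_add hN]
  ring_nf

theorem continuousOn_rpow_div_sub_mul_rpow {p α : ℝ} (hp : 0 ≤ p) (hα : 0 ≤ α) (c : ℝ) :
    ContinuousOn (fun N : ℝ => N ^ p / p - c * N ^ α) (Ici 0) :=
  (((Real.continuous_rpow_const hp).div_const p).sub
    (continuous_const.mul (Real.continuous_rpow_const hα))).continuousOn

theorem mul_abs_rpow_le {f s c N α : ℝ} (hα : 0 ≤ α) (hc : 0 ≤ c) (hN : 0 ≤ N)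
    (hs : |s| ≤ c * N) : f * |s| ^ α ≤ max f 0 * c ^ α * N ^ α := by
  calc f * |s| ^ α ≤ max f 0 * |s| ^ α := by gcongr; exact le_max_left _ _
    _ ≤ max f 0 * (c * N) ^ α := by gcongr
    _ = max f 0 * c ^ α * N ^ α := by rw [Real.mul_rpow hc hN, mul_assoc]

end RealAnalysis

section Graph

variable {V : Type*} [Fintype V]

theorem intV_mono {μ u v : V → ℝ} (hμ : ∀ x, 0 ≤ μ x) (huv : ∀ x, u x ≤ v x) :
    intV μ u ≤ intV μ v :=
  Finset.sum_le_sum fun x _ => mul_le_mul_of_nonneg_left (huv x) (hμ x)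

theorem intV_mul_add_mul_add (μ a b g : V → ℝ) (X Y : ℝ) :
    intV μ (fun x => a x * X + b x * Y + g x) = intV μ a * X + intV μ b * Y + intV μ g := by
  simp only [intV, Finset.sum_mul, ← Finset.sum_add_distrib]
  exact Finset.sum_congr rfl fun x _ => by ring

theorem gradm_nonneg (w : V → V → ℝ) (μ : V → ℝ) (m : ℕ) (u : V → ℝ) (x : V) :
    0 ≤ gradm w μ m u x := by
  unfold gradm
  split
  · exact Real.sqrt_nonneg _
  · exact abs_nonneg _

variable {w : V → V → ℝ} {μ h : V → ℝ} {m : ℕ} {l : ℝ}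

theorem wnorm_integrand_nonneg (hh : ∀ x, 0 ≤ h x) (u : V → ℝ) (x : V) :
    0 ≤ gradm w μ m u x ^ l + h x * |u x| ^ l := by
  have := gradm_nonneg w μ m u x
  have := hh x
  positivity

theorem wnorm_nonneg (hμ : ∀ x, 0 ≤ μ x) (hh : ∀ x, 0 ≤ h x) (u : V → ℝ) :
    0 ≤ wnorm w μ h m l u :=
  Real.rpow_nonneg (Finset.sum_nonneg fun x _ =>
    mul_nonneg (hμ x) (wnorm_integrand_nonneg hh u x)) _

theorem mul_abs_rpow_le_wnorm_rpow (hμ : ∀ x, 0 ≤ μ x) (hh : ∀ x, 0 ≤ h x) (hl : l ≠ 0)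
    (u : V → ℝ) (x : V) : μ x * h x * |u x| ^ l ≤ wnorm w μ h m l u ^ l := by
  have hterm : ∀ y, 0 ≤ μ y * (gradm w μ m u y ^ l + h y * |u y| ^ l) :=
    fun y => mul_nonneg (hμ y) (wnorm_integrand_nonneg hh u y)
  have hS : 0 ≤ intV μ (fun y => gradm w μ m u y ^ l + h y * |u y| ^ l) :=
    Finset.sum_nonneg fun y _ => hterm y
  rw [wnorm, one_div, Real.rpow_inv_rpow hS hl]
  calc μ x * h x * |u x| ^ l
      ≤ μ x * (gradm w μ m u x ^ l + h x * |u x| ^ l) := by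
        rw [mul_assoc]
        exact mul_le_mul_of_nonneg_left
          (le_add_of_nonneg_left (Real.rpow_nonneg (gradm_nonneg w μ m u x) l)) (hμ x)
    _ ≤ intV μ (fun y => gradm w μ m u y ^ l + h y * |u y| ^ l) :=
        Finset.single_le_sum (fun y _ => hterm y) (Finset.mem_univ x)

theorem abs_le_wnorm (hμ : ∀ x, 0 < μ x) (hh : ∀ x, 0 < h x) (hl : 0 < l)
    (u : V → ℝ) (x : V) :
    |u x| ≤ (μ x * h x)⁻¹ ^ l⁻¹ * wnorm w μ h m l u := by
  have hμh : 0 < μ x * h x := mul_pos (hμ x) (hh x)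
  have hN : 0 ≤ wnorm w μ h m l u := wnorm_nonneg (fun y => (hμ y).le) (fun y => (hh y).le) u
  have hpow : |u x| ^ l ≤ (μ x * h x)⁻¹ * wnorm w μ h m l u ^ l := by
    rw [inv_mul_eq_div, le_div_iff₀' hμh]
    exact mul_abs_rpow_le_wnorm_rpow (fun y => (hμ y).le) (fun y => (hh y).le) hl.ne' u x
  calc |u x| = (|u x| ^ l) ^ l⁻¹ := (Real.rpow_rpow_inv (abs_nonneg _) hl.ne').symm
    _ ≤ ((μ x * h x)⁻¹ * wnorm w μ h m l u ^ l) ^ l⁻¹ := by gcongr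
    _ = (μ x * h x)⁻¹ ^ l⁻¹ * wnorm w μ h m l u := by
        rw [Real.mul_rpow (by positivity) (by positivity), Real.rpow_rpow_inv hN hl.ne']

theorem PsiF_le {F : V → ℝ → ℝ → ℝ} {α β : ℝ} {f1 f2 g c1 c2 u v : V → ℝ} {N1 N2 : ℝ}
    (hμ : ∀ x, 0 ≤ μ x) (hα : 0 ≤ α) (hβ : 0 ≤ β)
    (hF : ∀ x s t, F x s t ≤ f1 x * |s| ^ α + f2 x * |t| ^ β + g x)
    (hc1 : ∀ x, 0 ≤ c1 x) (hc2 : ∀ x, 0 ≤ c2 x) (hN1 : 0 ≤ N1) (hN2 : 0 ≤ N2)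
    (hu : ∀ x, |u x| ≤ c1 x * N1) (hv : ∀ x, |v x| ≤ c2 x * N2) :
    PsiF μ F u v ≤ intV μ (fun x => max (f1 x) 0 * c1 x ^ α) * N1 ^ α
      + intV μ (fun x => max (f2 x) 0 * c2 x ^ β) * N2 ^ β + intV μ g := by
  rw [← intV_mul_add_mul_add]
  refine intV_mono hμ fun x => ?_
  linarith [hF x (u x) (v x), mul_abs_rpow_le (f := f1 x) hα (hc1 x) hN1 (hu x),
    mul_abs_rpow_le (f := f2 x) hβ (hc2 x) hN2 (hv x)]

end Graph

theorem stmt7_general {V : Type*} [Fintype V]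
    (w : V → V → ℝ) (μ : V → ℝ)
    (hμ : ∀ x, 0 < μ x)
    (m1 m2 : ℕ)
    (p q : ℝ) (hp : 2 ≤ p) (hq : 2 ≤ q)
    (h1 h2 : V → ℝ) (hh1 : ∀ x, 0 < h1 x) (hh2 : ∀ x, 0 < h2 x)
    (F : V → ℝ → ℝ → ℝ)
    (α β : ℝ) (hα0 : 0 ≤ α) (hαp : α < p) (hβ0 : 0 ≤ β) (hβq : β < q)
    (f1 f2 g : V → ℝ)
    (hF2 : ∀ x s t, F x s t ≤ f1 x * |s| ^ α + f2 x * |t| ^ β + g x)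
    (lam : ℝ) (hlam : 0 < lam) :
    ∀ K : ℝ, ∃ R : ℝ, 0 < R ∧ ∀ u v : V → ℝ,
      R ≤ wnorm w μ h1 m1 p u + wnorm w μ h2 m2 q v →
      K ≤ PhiF w μ h1 h2 m1 m2 p q u v - lam * PsiF μ F u v := by
  intro K
  have hp0 : 0 < p := by linarith
  have hq0 : 0 < q := by linarith
  set A := intV μ (fun x => max (f1 x) 0 * ((μ x * h1 x)⁻¹ ^ p⁻¹) ^ α)
  set B := intV μ (fun x => max (f2 x) 0 * ((μ x * h2 x)⁻¹ ^ q⁻¹) ^ β)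
  obtain ⟨R, hR, hcoer⟩ := exists_le_add_of_tendsto_atTop
    (continuousOn_rpow_div_sub_mul_rpow hp0.le hα0 (lam * A))
    (continuousOn_rpow_div_sub_mul_rpow hq0.le hβ0 (lam * B))
    (tendsto_rpow_div_sub_mul_rpow_atTop hp0 hαp (lam * A))
    (tendsto_rpow_div_sub_mul_rpow_atTop hq0 hβq (lam * B)) (K + lam * intV μ g)
  refine ⟨R, hR, fun u v huv => ?_⟩
  have hN1 : 0 ≤ wnorm w μ h1 m1 p u := wnorm_nonneg (fun x => (hμ x).le) (fun x => (hh1 x).le) u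
  have hN2 : 0 ≤ wnorm w μ h2 m2 q v := wnorm_nonneg (fun x => (hμ x).le) (fun x => (hh2 x).le) v
  have hΨ : PsiF μ F u v ≤ A * wnorm w μ h1 m1 p u ^ α + B * wnorm w μ h2 m2 q v ^ β + intV μ g :=
    PsiF_le (fun x => (hμ x).le) hα0 hβ0 hF2
      (fun x => by have := hμ x; have := hh1 x; positivity)
      (fun x => by have := hμ x; have := hh2 x; positivity)
      hN1 hN2 (abs_le_wnorm hμ hh1 hp0 u) (abs_le_wnorm hμ hh2 hq0 v)
  rw [PhiF]
  linear_combination hcoer _ _ hN1 hN2 huv + mul_le_mul_of_nonneg_left hΨ hlam.le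

/-- Lemma 3.3: coercivity of `Φ − λΨ` on a finite graph. -/
theorem stmt7 {V : Type*} [Fintype V] [Nonempty V]
    (w : V → V → ℝ) (μ : V → ℝ)
    (hw_symm : ∀ x y, w x y = w y x) (hw_nonneg : ∀ x y, 0 ≤ w x y)
    (hw_diag : ∀ x, w x x = 0) (hμ : ∀ x, 0 < μ x)
    (m1 m2 : ℕ) (hm1 : 1 ≤ m1) (hm2 : 1 ≤ m2)
    (p q : ℝ) (hp : 2 ≤ p) (hq : 2 ≤ q)
    (h1 h2 : V → ℝ) (hh1 : ∀ x, 0 < h1 x) (hh2 : ∀ x, 0 < h2 x)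
    (F : V → ℝ → ℝ → ℝ)
    (hFcont : ∀ x, Continuous (fun st : ℝ × ℝ => F x st.1 st.2))
    (α β : ℝ) (hα0 : 0 ≤ α) (hαp : α < p) (hβ0 : 0 ≤ β) (hβq : β < q)
    (f1 f2 g : V → ℝ)
    (hF2 : ∀ x s t, F x s t ≤ f1 x * |s| ^ α + f2 x * |t| ^ β + g x)
    (lam : ℝ) (hlam : 0 < lam) :
    ∀ K : ℝ, ∃ R : ℝ, 0 < R ∧ ∀ u v : V → ℝ,
      R ≤ wnorm w μ h1 m1 p u + wnorm w μ h2 m2 q v →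
      K ≤ PhiF w μ h1 h2 m1 m2 p q u v - lam * PsiF μ F u v :=
  stmt7_general w μ hμ m1 m2 p q hp hq h1 h2 hh1 hh2 F α β hα0 hαp hβ0 hβq f1 f2 g hF2 lam hlam
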